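/- arXiv:1702.05016 — 2 statements merged into one kernel-verified Lean document; each statement's English description precedes it below -/
import Mathlib

section
/- Let r, s, a, b, c, d, m, n be integers with (r,s) ≠ (0,0). Then det([a-1, c; b, d-1]) = 0 and det([rm+a-1, sm+c; rn+b, sn+d-1]) = 0 if and only if either (i) the vectors (a-1,b), (c,d-1), (m,n) all lie in a common cyclic subgroup of ℤ², or (ii) s·(a-1,b) = r·(c,d-1). -/
/-!
Write `A = (a - 1, b)`, `C = (c, d - 1)`, `v = (m, n)` and `A × C` for the 2 × 2 determinant with
columns `A`, `C`. The two determinants in the theorem are `A × C` and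
`(r v + A) × (s v + C) = A × C + v × (r C - s A)`.
If `A × C = 0`, then `A = e g` and `C = t g` for a primitive vector `g`, so
`v × (r C - s A) = (r t - s e) (v × g)` vanishes exactly when `s A = r C` or `v` is a multiple of `g`.
Conversely `s A = r C` with `(r, s) ≠ 0` forces `A × C = 0`.
-/

section CommRing

variable {R : Type*} [CommRing R]

def det2 (x y : R × R) : R := x.1 * y.2 - x.2 * y.1

@[simp]
lemma det2_self (x : R × R) : det2 x x = 0 := by
  simp only [det2]; ring

lemma det2_swap (x y : R × R) : det2 y x = -det2 x y := by
  simp only [det2]; ring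

@[simp]
lemma det2_smul_left (k : R) (x y : R × R) : det2 (k • x) y = k * det2 x y := by
  simp only [det2, Prod.smul_fst, Prod.smul_snd, smul_eq_mul]; ring

@[simp]
lemma det2_smul_right (k : R) (x y : R × R) : det2 x (k • y) = k * det2 x y := by
  simp only [det2, Prod.smul_fst, Prod.smul_snd, smul_eq_mul]; ring

lemma det2_smul_add_smul_add (r s : R) (v x y : R × R) :
    det2 (r • v + x) (s • v + y) = det2 x y + det2 v (r • y - s • x) := by
  simp only [det2, Prod.fst_add, Prod.snd_add, Prod.fst_sub, Prod.snd_sub, Prod.smul_fst,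
    Prod.smul_snd, smul_eq_mul]
  ring

lemma exists_smul_eq_of_det2_eq_zero {g y : R × R} (hg : IsCoprime g.1 g.2)
    (h : det2 g y = 0) : ∃ t : R, y = t • g := by
  obtain ⟨u, w, huw⟩ := hg
  refine ⟨u * y.1 + w * y.2, Prod.ext ?_ ?_⟩
  · simp only [Prod.smul_fst, smul_eq_mul, det2] at h ⊢
    linear_combination (-y.1) * huw - w * h
  · simp only [Prod.smul_snd, smul_eq_mul, det2] at h ⊢
    linear_combination (-y.2) * huw + u * h

lemma det2_eq_zero_of_smul_eq_smul [IsDomain R] {r s : R} {x y : R × R} (hrs : (r, s) ≠ 0)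
    (h : s • x = r • y) : det2 x y = 0 := by
  by_contra hxy
  have hr : r * det2 x y = 0 := by
    rw [← det2_smul_right, ← h, det2_smul_right, det2_self, mul_zero]
  have hs : s * det2 x y = 0 := by
    rw [← det2_smul_left, h, det2_smul_left, det2_self, mul_zero]
  exact hrs (Prod.ext ((mul_eq_zero.1 hr).resolve_right hxy) ((mul_eq_zero.1 hs).resolve_right hxy))

end CommRing

lemma Int.exists_isCoprime_smul_eq (x : ℤ × ℤ) :
    ∃ g : ℤ × ℤ, IsCoprime g.1 g.2 ∧ ∃ e : ℤ, x = e • g := by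
  by_cases hx : x = 0
  · exact ⟨(1, 0), isCoprime_one_left, 0, by simp [hx]⟩
  · have hgcd : 0 < Int.gcd x.1 x.2 :=
      Nat.pos_of_ne_zero fun h0 => hx (Prod.ext_iff.2 (Int.gcd_eq_zero_iff.1 h0))
    obtain ⟨g₁, g₂, hg, h₁, h₂⟩ := Int.exists_gcd_one hgcd
    exact ⟨(g₁, g₂), Int.isCoprime_iff_gcd_eq_one.2 hg, Int.gcd x.1 x.2,
      Prod.ext (h₁.trans (mul_comm _ _)) (h₂.trans (mul_comm _ _))⟩

lemma Int.exists_isCoprime_of_det2_eq_zero {x y : ℤ × ℤ} (h : det2 x y = 0) :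
    ∃ g : ℤ × ℤ, IsCoprime g.1 g.2 ∧ (∃ e : ℤ, x = e • g) ∧ ∃ t : ℤ, y = t • g := by
  by_cases hx : x = 0
  · obtain ⟨g, hg, t, rfl⟩ := Int.exists_isCoprime_smul_eq y
    exact ⟨g, hg, ⟨0, by simp [hx]⟩, t, rfl⟩
  · obtain ⟨g, hg, e, rfl⟩ := Int.exists_isCoprime_smul_eq x
    have he : e ≠ 0 := by rintro rfl; exact hx (zero_smul ℤ g)
    rw [det2_smul_left, mul_eq_zero, or_iff_right he] at h
    exact ⟨g, hg, ⟨e, rfl⟩, exists_smul_eq_of_det2_eq_zero hg h⟩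

lemma Int.det2_eq_zero_and_det2_eq_zero_iff {r s : ℤ} {x y v : ℤ × ℤ} (hrs : (r, s) ≠ 0) :
    (det2 x y = 0 ∧ det2 v (r • y - s • x) = 0) ↔
      (∃ g : ℤ × ℤ, (∃ k : ℤ, x = k • g) ∧ (∃ k : ℤ, y = k • g) ∧ ∃ k : ℤ, v = k • g) ∨
        s • x = r • y := by
  constructor
  · rintro ⟨hxy, hv⟩
    obtain ⟨g, hg, ⟨e, rfl⟩, t, rfl⟩ := Int.exists_isCoprime_of_det2_eq_zero hxy
    rw [smul_smul, smul_smul, ← sub_smul, det2_smul_right, mul_eq_zero, det2_swap,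
      neg_eq_zero] at hv
    rcases hv with hcoef | hvg
    · exact Or.inr (by rw [smul_smul, smul_smul, sub_eq_zero.1 hcoef])
    · exact Or.inl ⟨g, ⟨e, rfl⟩, ⟨t, rfl⟩, exists_smul_eq_of_det2_eq_zero hg hvg⟩
  · rintro (⟨g, ⟨e, rfl⟩, ⟨t, rfl⟩, u, rfl⟩ | h)
    · simp only [smul_smul, ← sub_smul, det2_smul_left, det2_smul_right, det2_self, mul_zero,
        and_self]
    · exact ⟨det2_eq_zero_of_smul_eq_smul hrs h, by simp [h, det2]⟩

theorem stmt_10 (r s a b c d m n : ℤ) (hrs : (r, s) ≠ (0, 0)) :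
    ((a - 1) * (d - 1) - c * b = 0 ∧
        (r * m + a - 1) * (s * n + d - 1) - (s * m + c) * (r * n + b) = 0) ↔
      ((∃ g : ℤ × ℤ, (∃ k : ℤ, (a - 1, b) = k • g) ∧ (∃ k : ℤ, (c, d - 1) = k • g) ∧
          (∃ k : ℤ, (m, n) = k • g)) ∨
        s • (a - 1, b) = r • (c, d - 1)) := by
  have hsecond : (r * m + a - 1) * (s * n + d - 1) - (s * m + c) * (r * n + b) =
      det2 (a - 1, b) (c, d - 1) + det2 (m, n) (r • (c, d - 1) - s • (a - 1, b)) := by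
    rw [← det2_smul_add_smul_add]
    simp only [det2, Prod.smul_mk, Prod.mk_add_mk, smul_eq_mul]
    ring
  have hfirst : (a - 1) * (d - 1) - c * b = det2 (a - 1, b) (c, d - 1) := by
    simp only [det2]; ring
  rw [hsecond, hfirst, ← Int.det2_eq_zero_and_det2_eq_zero_iff hrs]
  exact and_congr_right fun h => by rw [h, zero_add]
end

section
/- Let F be the free group on generators u, v. For each pair of integers (p, q) with p ∈ {0,1} or q ∈ {0,1}, and for the group P given by the presentation with generators B, u, v, x, y and relations xux⁻¹ = u, xvx⁻¹ = v[v⁻¹,u]B⁻¹[u,v⁻¹], xBx⁻¹ = u[v⁻¹,u]B[u,v⁻¹]u⁻¹, yuy⁻¹ = v[v⁻¹,u]Buv⁻¹, yvy⁻¹ = v, yBy⁻¹ = uvu⁻¹Buv⁻¹u⁻¹, the elements (x^p y^q)^k and (u^p v^q)^l commute in P for all integers k, l. -/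
/-- Generators of the presentation of `P₂(T²∖{1})`. -/
inductive Gen | B | u | v | x | y
  deriving DecidableEq

open Gen commutatorElement in
/-- The relators of the presentation of `P₂(T²∖{1})` (Proposition 5.2):
each relation `LHS = RHS` is recorded as the relator `LHS * RHS⁻¹`. -/
def rels : Set (FreeGroup Gen) :=
  letI B : FreeGroup Gen := FreeGroup.of Gen.B
  letI u : FreeGroup Gen := FreeGroup.of Gen.u
  letI v : FreeGroup Gen := FreeGroup.of Gen.v
  letI x : FreeGroup Gen := FreeGroup.of Gen.x
  letI y : FreeGroup Gen := FreeGroup.of Gen.y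
  { x * u * x⁻¹ * u⁻¹,
    x * v * x⁻¹ * (v * ⁅v⁻¹, u⁆ * B⁻¹ * ⁅u, v⁻¹⁆)⁻¹,
    x * B * x⁻¹ * (u * ⁅v⁻¹, u⁆ * B * ⁅u, v⁻¹⁆ * u⁻¹)⁻¹,
    y * u * y⁻¹ * (v * ⁅v⁻¹, u⁆ * B * u * v⁻¹)⁻¹,
    y * v * y⁻¹ * v⁻¹,
    y * B * y⁻¹ * (u * v * u⁻¹ * B * u * v⁻¹ * u⁻¹)⁻¹ }

/-- The group `P₂(T²∖{1})` given by the above presentation. -/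
abbrev P : Type := PresentedGroup rels

/-!
Conjugation by `x` fixes `u` and conjugation by `y` fixes `v`, which settles `p = 0` and `q = 0`;
otherwise it suffices that `x ^ p * y ^ q` commutes with `u ^ p * v ^ q`. With `B₁₂ = B⁻¹[u, v⁻¹]`
the relations say that conjugation by `x` fixes `u` and `u⁻¹ B₁₂` and sends `v` to
`u v (u⁻¹ B₁₂)`, while conjugation by `y` fixes `v` and `v B₁₂⁻¹` and sends `u` to
`(v B₁₂⁻¹) u v⁻¹`. Iterating gives `x^r v x^{-r} = u^r v (u⁻¹ B₁₂)^r` and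
`y^r u y^{-r} = (v B₁₂⁻¹)^r u v^{-r}`, and with these one checks directly that `x y^q` fixes
`u v^q` and `x^p y` fixes `u^p v` under conjugation.
-/

theorem MulAut.conj_zpow_apply_of_conj_eq {G : Type*} [Group G] {g a c d : G}
    (hc : Commute g c) (hd : Commute g d) (h : MulAut.conj g a = c * a * d) (n : ℤ) :
    MulAut.conj (g ^ n) a = c ^ n * a * d ^ n := by
  -- `h` says that `a` semiconjugates `d * g` to `c⁻¹ * g`, and both commute with `g`.
  have hs : SemiconjBy a (d * g) (c⁻¹ * g) := by
    rw [MulAut.conj_apply, mul_inv_eq_iff_eq_mul] at h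
    rw [SemiconjBy, mul_assoc c⁻¹, h]
    group
  have hn := hs.zpow_right n
  rw [hd.symm.mul_zpow, hc.symm.inv_left.mul_zpow, SemiconjBy, inv_zpow] at hn
  rw [MulAut.conj_apply, mul_inv_eq_iff_eq_mul, mul_assoc, mul_assoc, hn]
  group

theorem commute_iff_conj_apply_eq {G : Type*} [Group G] {g a : G} :
    Commute g a ↔ MulAut.conj g a = a := by
  rw [MulAut.conj_apply, mul_inv_eq_iff_eq_mul]
  rfl

namespace P

open scoped commutatorElement

abbrev x : P := PresentedGroup.of Gen.x
abbrev y : P := PresentedGroup.of Gen.y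
abbrev u : P := PresentedGroup.of Gen.u
abbrev v : P := PresentedGroup.of Gen.v
abbrev B : P := PresentedGroup.of Gen.B

theorem relations :
    MulAut.conj x u = u ∧
    MulAut.conj x v = v * ⁅v⁻¹, u⁆ * B⁻¹ * ⁅u, v⁻¹⁆ ∧
    MulAut.conj x B = u * ⁅v⁻¹, u⁆ * B * ⁅u, v⁻¹⁆ * u⁻¹ ∧
    MulAut.conj y u = v * ⁅v⁻¹, u⁆ * B * u * v⁻¹ ∧
    MulAut.conj y v = v ∧
    MulAut.conj y B = u * v * u⁻¹ * B * u * v⁻¹ * u⁻¹ := by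
  have h : ∀ r ∈ rels, PresentedGroup.mk rels r = 1 := fun _ => PresentedGroup.one_of_mem
  nth_rw 1 [rels] at h
  simp only [Set.forall_mem_insert, Set.mem_singleton_iff, forall_eq, map_mul, map_inv,
    map_commutatorElement, mul_inv_eq_one] at h
  exact h

def B₁₂ : P := B⁻¹ * ⁅u, v⁻¹⁆

theorem commute_x_u : Commute x u := by
  obtain ⟨hxu, -⟩ := relations
  exact commute_iff_conj_apply_eq.mpr hxu

theorem commute_y_v : Commute y v := by
  obtain ⟨-, -, -, -, hyv, -⟩ := relations
  exact commute_iff_conj_apply_eq.mpr hyv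

theorem conj_x_v : MulAut.conj x v = u * v * (u⁻¹ * B₁₂) := by
  obtain ⟨-, hxv, -⟩ := relations
  rw [hxv, B₁₂]
  simp only [commutatorElement_def]
  group

theorem conj_y_u : MulAut.conj y u = v * B₁₂⁻¹ * u * v⁻¹ := by
  obtain ⟨-, -, -, hyu, -⟩ := relations
  rw [hyu, B₁₂]
  simp only [commutatorElement_def]
  group

theorem v_mul_B₁₂_inv : v * B₁₂⁻¹ = u * v * u⁻¹ * B := by
  simp only [B₁₂, commutatorElement_def]
  group

theorem conj_x_v_mul_B₁₂_inv : MulAut.conj x (v * B₁₂⁻¹) = u * v * u⁻¹ := by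
  obtain ⟨hxu, hxv, hxB, -⟩ := relations
  rw [v_mul_B₁₂_inv]
  simp only [map_mul, map_inv, hxu, hxv, hxB, commutatorElement_def]
  group

theorem commute_y_v_mul_B₁₂_inv : Commute y (v * B₁₂⁻¹) := by
  obtain ⟨-, -, -, hyu, hyv, hyB⟩ := relations
  rw [commute_iff_conj_apply_eq, v_mul_B₁₂_inv]
  simp only [map_mul, map_inv, hyu, hyv, hyB, commutatorElement_def]
  group

theorem commute_x_u_inv_mul_B₁₂ : Commute x (u⁻¹ * B₁₂) := by
  have h : u⁻¹ * B₁₂ = u⁻¹ * (v * B₁₂⁻¹)⁻¹ * v := by group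
  rw [commute_iff_conj_apply_eq, h, map_mul, map_mul, map_inv, map_inv,
    commute_iff_conj_apply_eq.mp commute_x_u, conj_x_v_mul_B₁₂_inv, conj_x_v]
  group

theorem conj_x_zpow_v (r : ℤ) : MulAut.conj (x ^ r) v = u ^ r * v * (u⁻¹ * B₁₂) ^ r :=
  MulAut.conj_zpow_apply_of_conj_eq commute_x_u commute_x_u_inv_mul_B₁₂ conj_x_v r

theorem conj_y_zpow_u (r : ℤ) : MulAut.conj (y ^ r) u = (v * B₁₂⁻¹) ^ r * u * v ^ (-r) := by
  rw [zpow_neg, ← inv_zpow]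
  exact MulAut.conj_zpow_apply_of_conj_eq commute_y_v_mul_B₁₂_inv commute_y_v.inv_right conj_y_u r

theorem commute_x_mul_y_zpow (q : ℤ) : Commute (x * y ^ q) (u * v ^ q) := by
  rw [commute_iff_conj_apply_eq]
  calc MulAut.conj (x * y ^ q) (u * v ^ q)
      = MulAut.conj x (MulAut.conj (y ^ q) u * MulAut.conj (y ^ q) (v ^ q)) := by
        rw [map_mul MulAut.conj, MulAut.mul_apply, map_mul]
    _ = MulAut.conj x ((v * B₁₂⁻¹) ^ q * u) := by
        rw [conj_y_zpow_u, commute_iff_conj_apply_eq.mp (commute_y_v.zpow_zpow q q)]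
        group
    _ = (u * v * u⁻¹) ^ q * u := by
        rw [map_mul, map_zpow, conj_x_v_mul_B₁₂_inv,
          commute_iff_conj_apply_eq.mp commute_x_u]
    _ = u * v ^ q := by
        rw [conj_zpow]
        group

theorem commute_x_zpow_mul_y (p : ℤ) : Commute (x ^ p * y) (u ^ p * v) := by
  rw [commute_iff_conj_apply_eq]
  calc MulAut.conj (x ^ p * y) (u ^ p * v)
      = MulAut.conj (x ^ p) (MulAut.conj y u ^ p * MulAut.conj y v) := by
        rw [map_mul MulAut.conj, MulAut.mul_apply, map_mul, map_zpow (MulAut.conj y)]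
    _ = MulAut.conj (x ^ p) (v * ((u⁻¹ * B₁₂) ^ p)⁻¹) := by
        rw [conj_y_u, commute_iff_conj_apply_eq.mp commute_y_v,
          show v * B₁₂⁻¹ * u * v⁻¹ = v * (u⁻¹ * B₁₂)⁻¹ * v⁻¹ by group, conj_zpow, inv_zpow]
        group
    _ = u ^ p * v := by
        rw [map_mul, map_inv, conj_x_zpow_v,
          commute_iff_conj_apply_eq.mp (commute_x_u_inv_mul_B₁₂.zpow_zpow p p)]
        group

end P

theorem stmt_13 (p q k l : ℤ) (h : (p = 0 ∨ p = 1) ∨ (q = 0 ∨ q = 1)) :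
    Commute
      (((PresentedGroup.of (rels := rels) Gen.x) ^ p *
          (PresentedGroup.of (rels := rels) Gen.y) ^ q) ^ k)
      (((PresentedGroup.of (rels := rels) Gen.u) ^ p *
          (PresentedGroup.of (rels := rels) Gen.v) ^ q) ^ l) := by
  suffices Commute (P.x ^ p * P.y ^ q) (P.u ^ p * P.v ^ q) from this.zpow_zpow k l
  rcases h with (rfl | rfl) | (rfl | rfl)
  · simpa using P.commute_y_v.zpow_zpow q q
  · simpa using P.commute_x_mul_y_zpow q
  · simpa using P.commute_x_u.zpow_zpow p p
  · simpa using P.commute_x_zpow_mul_y p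
end
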